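/- For n ≥ 4 and the function f_n defined by the DNF x_1x_2 ∨ ... ∨ x_1x_{n-1} ∨ x_2···x_n, the maximal false points of f_n are exactly: the points y_j (2 ≤ j ≤ n-1) with 0's precisely in coordinates 1 and j; the point z_1 with 0's precisely in coordinates 1 and n; and the point z_2 with 1's precisely in coordinates 1 and n. -/
import Mathlib


lemma bool_lt_aux {x y : Bool} (h : x ≤ y) (hne : y ≠ x) : x = false ∧ y = true := by
  revert h hne; cases x <;> cases y <;> decide

/-- `a` is a maximal false point of `f`. -/
def MaxZero {n : ℕ} (f : (Fin n → Bool) → Bool) (a : Fin n → Bool) : Prop :=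
  f a = false ∧ ∀ b, (∀ j, a j ≤ b j) → b ≠ a → f b = true

/-- The maximal zeros of `f_n` are exactly: the points with 0's precisely in coordinates
`x₁, x_j` (`2 ≤ j ≤ n-1`), the point with 0's precisely in coordinates `x₁, x_n`,
and the point with 1's precisely in coordinates `x₁, x_n` (0-based indexing). -/
theorem fn_maximal_zeros (n : ℕ) (hn : 4 ≤ n) (f : (Fin n → Bool) → Bool)
    (hf : ∀ x, f x = true ↔
      ((x ⟨0, by omega⟩ = true ∧ ∃ i : Fin n, 1 ≤ i.1 ∧ i.1 ≤ n - 2 ∧ x i = true) ∨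
        (∀ i : Fin n, 1 ≤ i.1 → x i = true))) :
    ∀ a : Fin n → Bool, MaxZero f a ↔
      ((∃ j : Fin n, 1 ≤ j.1 ∧ j.1 ≤ n - 2 ∧ ∀ i, a i = false ↔ (i.1 = 0 ∨ i = j)) ∨
        (∀ i, a i = false ↔ (i.1 = 0 ∨ i.1 = n - 1)) ∨
        (∀ i, a i = true ↔ (i.1 = 0 ∨ i.1 = n - 1))) := by
  have h0n : (0:ℕ) < n := by omega
  have h1n : (1:ℕ) < n := by omega
  have h2n : (2:ℕ) < n := by omega
  have hn1 : n - 1 < n := by omega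
  set i0 : Fin n := ⟨0, h0n⟩ with hi0
  set i1 : Fin n := ⟨1, h1n⟩ with hi1
  set i2 : Fin n := ⟨2, h2n⟩ with hi2
  set iN : Fin n := ⟨n - 1, hn1⟩ with hiN
  have hfalse : ∀ x : Fin n → Bool, f x = false ↔
      ¬((x i0 = true ∧ ∃ i : Fin n, 1 ≤ i.1 ∧ i.1 ≤ n - 2 ∧ x i = true) ∨
        (∀ i : Fin n, 1 ≤ i.1 → x i = true)) := by
    intro x
    rw [Bool.eq_false_iff]
    exact not_congr (hf x)
  intro a
  constructor
  · rintro ⟨hfa, hmax⟩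
    rw [hfalse] at hfa
    push_neg at hfa
    obtain ⟨hna1, j, hj1, hjf⟩ := hfa
    replace hjf : a j = false := Bool.eq_false_iff.mpr hjf
    cases ha0 : a i0 with
    | false =>
      -- the false coordinates of a are exactly i0 and j
      have huniq : ∀ i : Fin n, 1 ≤ i.1 → a i = false → i = j := by
        intro i hi hif
        by_contra hne
        have hb := hmax (Function.update a i true) ?_ ?_
        · rw [hf] at hb
          rcases hb with ⟨hb0, _⟩ | hball
          · rw [Function.update_of_ne
              (by intro h; rw [← h] at hi; exact Nat.not_succ_le_zero 0 hi)] at hb0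
            rw [ha0] at hb0; exact Bool.noConfusion hb0
          · have hbj := hball j hj1
            rw [Function.update_of_ne (Ne.symm hne)] at hbj
            rw [hjf] at hbj; exact Bool.noConfusion hbj
        · intro k
          by_cases hk : k = i
          · subst hk; simp [hif]
          · rw [Function.update_of_ne hk]
        · intro h
          have := congrFun h i
          rw [Function.update_self, hif] at this
          exact Bool.noConfusion this
      by_cases hjn : j.1 ≤ n - 2
      · left
        refine ⟨j, hj1, hjn, fun i => ⟨fun hif => ?_, fun h => ?_⟩⟩
        · rcases Nat.eq_zero_or_pos i.1 with h0 | h1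
          · exact Or.inl h0
          · exact Or.inr (huniq i h1 hif)
        · rcases h with h | h
          · rw [show i = i0 from Fin.ext h]; exact ha0
          · rw [h]; exact hjf
      · right; left
        have hjN : j = iN := Fin.ext (show j.1 = n - 1 from by have := j.2; omega)
        refine fun i => ⟨fun hif => ?_, fun h => ?_⟩
        · rcases Nat.eq_zero_or_pos i.1 with h0 | h1
          · exact Or.inl h0
          · right
            have := huniq i h1 hif
            rw [hjN] at this
            exact congrArg Fin.val this
        · rcases h with h | h
          · rw [show i = i0 from Fin.ext h]; exact ha0
          · rw [show i = j from by rw [hjN]; exact Fin.ext h]; exact hjf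
    | true =>
      have hmid : ∀ i : Fin n, 1 ≤ i.1 → i.1 ≤ n - 2 → a i = false := by
        intro i h1 h2
        exact Bool.eq_false_iff.mpr (hna1 ha0 i h1 h2)
      have haN : a iN = true := by
        by_contra hN
        replace hN : a iN = false := Bool.eq_false_iff.mpr hN
        have hb := hmax (Function.update a iN true) ?_ ?_
        · rw [hf] at hb
          rcases hb with ⟨_, i, hia, hib, hic⟩ | hball
          · rw [Function.update_of_ne (Fin.ne_of_val_ne (show i.1 ≠ n - 1 by omega))] at hic
            rw [hmid i hia hib] at hic; exact Bool.noConfusion hic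
          · have hb1 := hball i1 (show (1:ℕ) ≤ 1 from le_refl 1)
            rw [Function.update_of_ne (Fin.ne_of_val_ne (show (1:ℕ) ≠ n - 1 by omega))] at hb1
            rw [hmid i1 (show (1:ℕ) ≤ 1 from le_refl 1) (show (1:ℕ) ≤ n - 2 by omega)] at hb1
            exact Bool.noConfusion hb1
        · intro k
          by_cases hk : k = iN
          · subst hk; simp [hN]
          · rw [Function.update_of_ne hk]
        · intro h
          have := congrFun h iN
          rw [Function.update_self, hN] at this
          exact Bool.noConfusion this
      right; right
      intro i
      constructor
      · intro hit
        by_contra hcon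
        push_neg at hcon
        have hi1' : 1 ≤ i.1 := by omega
        have hi2' : i.1 ≤ n - 2 := by have := i.2; omega
        rw [hmid i hi1' hi2'] at hit
        exact Bool.noConfusion hit
      · rintro (h | h)
        · rw [show i = i0 from Fin.ext h]; exact ha0
        · rw [show i = iN from Fin.ext h]; exact haN
  · intro hcase
    have hstep : ∀ (b : Fin n → Bool), (∀ k, a k ≤ b k) → ∀ k, a k = true → b k = true := by
      intro b hle k hk
      have := hle k
      rw [hk] at this
      exact le_antisymm (Bool.le_true _) this
    rcases hcase with ⟨j, hj1, hj2, ha⟩ | ha | ha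
    · constructor
      · rw [hfalse]
        push_neg
        refine ⟨fun h0 => absurd ((ha i0).mpr (Or.inl rfl)) (by rw [h0]; simp),
          j, hj1, by rw [(ha j).mpr (Or.inr rfl)]; simp⟩
      · intro b hle hne
        obtain ⟨k, hk⟩ := Function.ne_iff.mp hne
        have hak : a k = false ∧ b k = true := bool_lt_aux (hle k) hk
        have hk0 : k.1 = 0 ∨ k = j := (ha k).mp hak.1
        have hatrue : ∀ i : Fin n, i.1 ≠ 0 → i ≠ j → a i = true := by
          intro i h1 h2
          cases h : a i
          · rcases (ha i).mp h with h' | h'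
            · exact absurd h' h1
            · exact absurd h' h2
          · rfl
        rw [hf]
        cases hb0 : b i0 with
        | true =>
          left
          refine ⟨rfl, ?_⟩
          by_cases hje : j = i1
          · refine ⟨i2, show (1:ℕ) ≤ 2 by omega, show (2:ℕ) ≤ n - 2 by omega, ?_⟩
            refine hstep b hle i2 (hatrue i2 (show (2:ℕ) ≠ 0 by omega) ?_)
            rw [hje]
            exact Fin.ne_of_val_ne (show (2:ℕ) ≠ 1 by omega)
          · refine ⟨i1, le_refl 1, show (1:ℕ) ≤ n - 2 by omega, ?_⟩
            exact hstep b hle i1 (hatrue i1 (show (1:ℕ) ≠ 0 by omega) (fun h => hje h.symm))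
        | false =>
          right
          intro i hi
          by_cases hij : i = j
          · rcases hk0 with h | h
            · exfalso
              have hbk : b i0 = true := by
                rw [← show k = i0 from Fin.ext h]; exact hak.2
              rw [hb0] at hbk; exact Bool.noConfusion hbk
            · rw [hij, ← h]; exact hak.2
          · refine hstep b hle i (hatrue i (by omega) hij)
    · constructor
      · rw [hfalse]
        push_neg
        refine ⟨fun h0 => absurd ((ha i0).mpr (Or.inl rfl)) (by rw [h0]; simp),
          iN, show (1:ℕ) ≤ n - 1 by omega,
          by rw [(ha iN).mpr (Or.inr rfl)]; simp⟩
      · intro b hle hne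
        obtain ⟨k, hk⟩ := Function.ne_iff.mp hne
        have hak : a k = false ∧ b k = true := bool_lt_aux (hle k) hk
        have hk0 : k.1 = 0 ∨ k.1 = n - 1 := (ha k).mp hak.1
        have hatrue : ∀ i : Fin n, i.1 ≠ 0 → i.1 ≠ n - 1 → a i = true := by
          intro i h1 h2
          cases h : a i
          · rcases (ha i).mp h with h' | h'
            · exact absurd h' h1
            · exact absurd h' h2
          · rfl
        rw [hf]
        cases hb0 : b i0 with
        | true =>
          left
          refine ⟨rfl, i1, le_refl 1, show (1:ℕ) ≤ n - 2 by omega, ?_⟩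
          exact hstep b hle i1 (hatrue i1 (show (1:ℕ) ≠ 0 by omega) (show (1:ℕ) ≠ n - 1 by omega))
        | false =>
          right
          intro i hi
          by_cases hij : i.1 = n - 1
          · rcases hk0 with h | h
            · exfalso
              have hbk : b i0 = true := by
                rw [← show k = i0 from Fin.ext h]; exact hak.2
              rw [hb0] at hbk; exact Bool.noConfusion hbk
            · rw [show i = k from Fin.ext (by omega)]; exact hak.2
          · exact hstep b hle i (hatrue i (by omega) hij)
    · constructor
      · rw [hfalse]
        push_neg
        constructor
        · intro _ i hia hib hit
          rcases (ha i).mp hit with h | h <;> omega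
        · refine ⟨i1, le_refl 1, ?_⟩
          intro h1t
          rcases (ha i1).mp h1t with h | h
          · exact absurd (show (1:ℕ) = 0 from h) (by omega)
          · exact absurd (show (1:ℕ) = n - 1 from h) (by omega)
      · intro b hle hne
        obtain ⟨k, hk⟩ := Function.ne_iff.mp hne
        have hak : a k = false ∧ b k = true := bool_lt_aux (hle k) hk
        have hk0 : ¬(k.1 = 0 ∨ k.1 = n - 1) := by
          intro h
          have := (ha k).mpr h
          rw [hak.1] at this; exact Bool.noConfusion this
        push_neg at hk0
        rw [hf]
        left
        exact ⟨hstep b hle i0 ((ha i0).mpr (Or.inl rfl)), k, by omega,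
          by have := k.2; omega, hak.2⟩
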